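/- Let (X, α) be a PNTS with X finite. An equivalence relation E on X is a UE-bisimulation if and only if for all (x,y) ∈ E: for every μ in the closed convex hull of α(x) there exists ν in the closed convex hull of α(y) with μ =_E ν, and vice versa. -/

import Mathlib

def IsDist {X : Type*} [Fintype X] (μ : X → ℝ) : Prop :=
  (∀ x, 0 ≤ μ x) ∧ ∑ x, μ x = 1

def EqMod {X : Type*} [Fintype X] (E : X → X → Prop) (μ ν : X → ℝ) : Prop :=
  ∀ A : Finset X, (∀ x ∈ A, ∀ y, E x y → y ∈ A) → (∑ x ∈ A, μ x) = ∑ x ∈ A, ν x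

def IsUEBisim {X : Type*} [Fintype X] (α : X → Set (X → ℝ)) (E : X → X → Prop) : Prop :=
  Equivalence E ∧ ∀ x y, E x y →
    ∀ f : X → ℝ, (∀ a b, E a b → f a = f b) →
      (⨆ μ ∈ α x, ∑ z, μ z * f z) = ⨆ ν ∈ α y, ∑ z, ν z * f z

/-!
Let `π : ℝ^X → ℝ^(X/E)` send `μ` to its masses on the `E`-classes. Then `μ =_E ν` iff
`π μ = π ν`, and the expectations of `E`-invariant functions are exactly the linear functionals
of `π μ`. A matching between the closed convex hulls therefore preserves expectations of invariant
`f`, and a bound on `α y` extends to its closed convex hull, so the suprema agree. Conversely, if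
`π μ` lay outside the compact convex set `π (closure (convexHull (α y)))`, Hahn–Banach would give an
invariant `f` whose expectation at `μ` exceeds a strict bound valid on `α y`, which the equality of
the suprema transfers to `α x` and hence to `μ`.
-/

open Finset
open scoped Classical

/-- In `ℝ` the empty supremum `⨆ _ : a ∈ s, F a` (for `a ∉ s`) is `0`, whence `0 ≤ c`. -/
theorem Real.biSup_le_iff_of_ne_univ {Y : Type*} {s : Set Y} {F : Y → ℝ} (hs : s ≠ Set.univ)
    (hF : BddAbove (F '' s)) {c : ℝ} :
    (⨆ a ∈ s, F a) ≤ c ↔ 0 ≤ c ∧ ∀ a ∈ s, F a ≤ c := by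
  obtain ⟨b, hb⟩ := (Set.ne_univ_iff_exists_notMem s).1 hs
  have hinner : (⨆ a ∈ s, F a) = ⨆ a, if a ∈ s then F a else 0 := by
    refine iSup_congr fun a => ?_
    split_ifs with ha
    · exact ciSup_pos ha
    · exact @Real.iSup_of_isEmpty _ ⟨ha⟩ _
  obtain ⟨M, hM⟩ := hF
  have hbdd : BddAbove (Set.range fun a => if a ∈ s then F a else 0) := by
    refine ⟨max 0 M, ?_⟩
    rintro _ ⟨a, rfl⟩
    dsimp only
    split_ifs with ha
    · exact (hM ⟨a, ha, rfl⟩).trans (le_max_right _ _)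
    · exact le_max_left _ _
  have : Nonempty Y := ⟨b⟩
  rw [hinner, ciSup_le_iff hbdd]
  refine ⟨fun h => ⟨by simpa [hb] using h b, fun a ha => by simpa [ha] using h a⟩, ?_⟩
  rintro ⟨h0, h⟩ a
  split_ifs with ha
  exacts [h a ha, h0]

theorem mem_image_of_forall_dual_le {V W : Type*} [NormedAddCommGroup V] [NormedSpace ℝ V]
    [FiniteDimensional ℝ V] [NormedAddCommGroup W] [NormedSpace ℝ W] (π : V →ₗ[ℝ] W)
    {K : Set V} (hK : IsCompact K) (hKconv : Convex ℝ K) {p : V}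
    (h : ∀ (φ : StrongDual ℝ W) (u : ℝ), (∀ v ∈ K, φ (π v) < u) → φ (π p) ≤ u) :
    π p ∈ π '' K := by
  by_contra hp
  obtain ⟨φ, u, hφK, hφp⟩ := geometric_hahn_banach_closed_point (hKconv.linear_image π)
    (hK.image π.continuous_of_finiteDimensional).isClosed hp
  exact (h φ u fun v hv => hφK _ ⟨v, hv, rfl⟩).not_gt hφp

section

variable {X : Type*} [Fintype X]

lemma EqMod.symm {E : X → X → Prop} {μ ν : X → ℝ} (h : EqMod E μ ν) : EqMod E ν μ :=
  fun A hA => (h A hA).symm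

section ConvexHull

variable {s : Set (X → ℝ)}

lemma closure_convexHull_subset_stdSimplex (hs : ∀ μ ∈ s, IsDist μ) :
    closure (convexHull ℝ s) ⊆ stdSimplex ℝ X :=
  closure_minimal (convexHull_min hs (convex_stdSimplex ℝ X)) (isCompact_stdSimplex ℝ X).isClosed

lemma isCompact_closure_convexHull (hs : ∀ μ ∈ s, IsDist μ) :
    IsCompact (closure (convexHull ℝ s)) :=
  (isCompact_stdSimplex ℝ X).of_isClosed_subset isClosed_closure
    (closure_convexHull_subset_stdSimplex hs)

lemma expect_le_of_mem_closure_convexHull {f : X → ℝ} {c : ℝ}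
    (h : ∀ ρ ∈ s, ∑ z, ρ z * f z ≤ c) {μ : X → ℝ} (hμ : μ ∈ closure (convexHull ℝ s)) :
    ∑ z, μ z * f z ≤ c := by
  have hlin : IsLinearMap ℝ fun ρ : X → ℝ => ∑ z, ρ z * f z :=
    ⟨fun ρ ρ' => by simp [add_mul, sum_add_distrib], fun r ρ => by simp [mul_sum, mul_assoc]⟩
  have hcont : Continuous fun ρ : X → ℝ => ∑ z, ρ z * f z := by fun_prop
  exact closure_minimal (convexHull_min h (convex_halfSpace_le hlin c))
    (isClosed_le hcont continuous_const) hμ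

lemma biSup_expect_le_iff (hs : ∀ μ ∈ s, IsDist μ) {f : X → ℝ} {c : ℝ} :
    (⨆ μ ∈ s, ∑ z, μ z * f z) ≤ c ↔ 0 ≤ c ∧ ∀ μ ∈ s, ∑ z, μ z * f z ≤ c := by
  have hzero : (0 : X → ℝ) ∉ s := fun h0 => by simpa using (hs 0 h0).2
  refine Real.biSup_le_iff_of_ne_univ ((Set.ne_univ_iff_exists_notMem _).2 ⟨0, hzero⟩) ?_
  have hcont : Continuous fun ρ : X → ℝ => ∑ z, ρ z * f z := by fun_prop
  exact ((isCompact_stdSimplex ℝ X).bddAbove_image hcont.continuousOn).mono (Set.image_mono hs)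

end ConvexHull

section ClassMass

variable (s : Setoid X)

noncomputable def classMass : (X → ℝ) →ₗ[ℝ] (Quotient s → ℝ) where
  toFun μ c := ∑ x with Quotient.mk s x = c, μ x
  map_add' μ ν := by ext c; simp [sum_add_distrib]
  map_smul' r μ := by ext c; simp [mul_sum]

lemma classMass_apply (μ : X → ℝ) (c : Quotient s) :
    classMass s μ c = ∑ x with Quotient.mk s x = c, μ x := rfl

lemma sum_classMass_mul (μ : X → ℝ) (g : Quotient s → ℝ) :
    ∑ c, classMass s μ c * g c = ∑ x, μ x * g (Quotient.mk s x) := by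
  simp_rw [classMass_apply, sum_mul]
  rw [← sum_fiberwise univ (Quotient.mk s) fun x => μ x * g (Quotient.mk s x)]
  refine sum_congr rfl fun c _ => sum_congr rfl fun x hx => ?_
  rw [(mem_filter.1 hx).2]

lemma eqMod_iff_classMass_eq {μ ν : X → ℝ} : EqMod s μ ν ↔ classMass s μ = classMass s ν := by
  constructor
  · intro h
    ext c
    refine h _ fun x hx y hxy => ?_
    simp only [mem_filter, mem_univ, true_and] at hx ⊢
    rw [← hx]
    exact Quotient.sound (s.symm hxy)
  · intro h A hA
    have hinv : ∀ a b, a ≈ b → (if a ∈ A then 1 else 0 : ℝ) = if b ∈ A then 1 else 0 :=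
      fun a b hab => by
        have hab' : a ∈ A ↔ b ∈ A := ⟨fun ha => hA a ha b hab, fun hb => hA b hb a (s.symm hab)⟩
        simp only [hab']
    have hmass : ∀ ρ : X → ℝ, ∑ x ∈ A, ρ x = ∑ c, classMass s ρ c * Quotient.lift _ hinv c := by
      intro ρ
      rw [sum_classMass_mul]
      simp [mul_ite, sum_ite_mem]
    rw [hmass, hmass, h]

lemma expect_eq_of_eqMod {f : X → ℝ} (hf : ∀ a b, s a b → f a = f b) {μ ν : X → ℝ}
    (h : EqMod s μ ν) : ∑ z, μ z * f z = ∑ z, ν z * f z := by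
  calc ∑ z, μ z * f z = ∑ c, classMass s μ c * Quotient.lift f hf c :=
        (sum_classMass_mul s μ (Quotient.lift f hf)).symm
    _ = ∑ c, classMass s ν c * Quotient.lift f hf c := by rw [(eqMod_iff_classMass_eq s).1 h]
    _ = ∑ z, ν z * f z := sum_classMass_mul s ν (Quotient.lift f hf)

lemma apply_classMass (φ : StrongDual ℝ (Quotient s → ℝ)) (ρ : X → ℝ) :
    φ (classMass s ρ) = ∑ x, ρ x * φ (Pi.single (Quotient.mk s x) 1) := by
  have hbasis : ∀ c : Quotient s, (fun j => if c = j then (1 : ℝ) else 0) = Pi.single c 1 := by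
    intro c
    ext j
    simp [Pi.single_apply, eq_comm]
  rw [← φ.coe_coe, LinearMap.pi_apply_eq_sum_univ]
  simp_rw [hbasis, smul_eq_mul]
  exact sum_classMass_mul s ρ fun c => φ (Pi.single c 1)

end ClassMass

lemma exists_eqMod_of_forall_expect_le (s : Setoid X) {K : Set (X → ℝ)} (hK : IsCompact K)
    (hKconv : Convex ℝ K) {μ : X → ℝ}
    (h : ∀ g : X → ℝ, (∀ a b, s a b → g a = g b) →
      ∀ u, (∀ ν ∈ K, ∑ z, ν z * g z < u) → ∑ z, μ z * g z ≤ u) :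
    ∃ ν ∈ K, EqMod s μ ν := by
  obtain ⟨ν, hν, hνμ⟩ := mem_image_of_forall_dual_le (classMass s) hK hKconv fun φ u hu => by
    simp only [apply_classMass] at hu ⊢
    exact h _ (fun a b hab => by rw [Quotient.sound hab]) u hu
  exact ⟨ν, hν, ((eqMod_iff_classMass_eq s).2 hνμ).symm⟩

lemma biSup_expect_le_of_forall_exists_eqMod (s : Setoid X) {A B : Set (X → ℝ)}
    (hA : ∀ μ ∈ A, IsDist μ) (hB : ∀ ν ∈ B, IsDist ν)
    (hmatch : ∀ μ ∈ A, ∃ ν ∈ closure (convexHull ℝ B), EqMod s μ ν)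
    {f : X → ℝ} (hf : ∀ a b, s a b → f a = f b) :
    (⨆ μ ∈ A, ∑ z, μ z * f z) ≤ ⨆ ν ∈ B, ∑ z, ν z * f z := by
  obtain ⟨hsup_nonneg, hle_sup⟩ := (biSup_expect_le_iff hB).1 le_rfl
  refine (biSup_expect_le_iff hA).2 ⟨hsup_nonneg, fun μ hμ => ?_⟩
  obtain ⟨ν, hν, hμν⟩ := hmatch μ hμ
  rw [expect_eq_of_eqMod s hf hμν]
  exact expect_le_of_mem_closure_convexHull hle_sup hν

namespace IsUEBisim

variable {α : X → Set (X → ℝ)} {E : X → X → Prop}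

lemma expect_le_of_forall_expect_le (hb : IsUEBisim α E) (hdist : ∀ x, ∀ μ ∈ α x, IsDist μ)
    {x y : X} (hxy : E x y) {g : X → ℝ} (hg : ∀ a b, E a b → g a = g b) {u : ℝ}
    (hu : ∀ ρ ∈ α y, ∑ z, ρ z * g z ≤ u) {μ : X → ℝ} (hμ : μ ∈ closure (convexHull ℝ (α x))) :
    ∑ z, μ z * g z ≤ u := by
  -- Shifting `g` by `t` keeps it invariant and makes the bound `u + t` nonnegative.
  set t := max 0 (-u)
  have ht : -u ≤ t := le_max_right _ _
  have hshift : ∀ ρ : X → ℝ, IsDist ρ → ∑ z, ρ z * (g z + t) = ∑ z, ρ z * g z + t :=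
    fun ρ hρ => by simp [mul_add, sum_add_distrib, ← sum_mul, hρ.2]
  have hsup : (⨆ ρ ∈ α y, ∑ z, ρ z * (g z + t)) ≤ u + t :=
    (biSup_expect_le_iff (hdist y)).2 ⟨by linarith, fun ρ hρ => by
      rw [hshift ρ (hdist y ρ hρ)]
      linarith [hu ρ hρ]⟩
  rw [← hb.2 x y hxy _ fun a b hab => by rw [hg a b hab]] at hsup
  have := expect_le_of_mem_closure_convexHull ((biSup_expect_le_iff (hdist x)).1 hsup).2 hμ
  rw [hshift μ (closure_convexHull_subset_stdSimplex (hdist x) hμ)] at this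
  linarith

lemma exists_eqMod (hb : IsUEBisim α E) (hdist : ∀ x, ∀ μ ∈ α x, IsDist μ) {x y : X}
    (hxy : E x y) {μ : X → ℝ} (hμ : μ ∈ closure (convexHull ℝ (α x))) :
    ∃ ν ∈ closure (convexHull ℝ (α y)), EqMod E μ ν :=
  exists_eqMod_of_forall_expect_le ⟨E, hb.1⟩ (isCompact_closure_convexHull (hdist y))
    (convex_convexHull ℝ _).closure fun _g hg _u hu =>
      hb.expect_le_of_forall_expect_le hdist hxy hg
        (fun ρ hρ => (hu ρ (subset_closure (subset_convexHull ℝ _ hρ))).le) hμ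

end IsUEBisim

end

theorem stmt_15 {X : Type*} [Fintype X] (α : X → Set (X → ℝ))
    (hdist : ∀ x, ∀ μ ∈ α x, IsDist μ)
    (E : X → X → Prop) (hE : Equivalence E) :
    IsUEBisim α E ↔
      ∀ x y, E x y →
        (∀ μ ∈ closure (convexHull ℝ (α x)),
          ∃ ν ∈ closure (convexHull ℝ (α y)), EqMod E μ ν) ∧
        (∀ ν ∈ closure (convexHull ℝ (α y)),
          ∃ μ ∈ closure (convexHull ℝ (α x)), EqMod E μ ν) := by
  refine ⟨fun hb x y hxy => ⟨fun μ hμ => hb.exists_eqMod hdist hxy hμ, fun ν hν => ?_⟩,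
    fun hmatch => ⟨hE, fun x y hxy f hf => le_antisymm ?_ ?_⟩⟩
  · obtain ⟨μ, hμ, hνμ⟩ := hb.exists_eqMod hdist (hE.symm hxy) hν
    exact ⟨μ, hμ, hνμ.symm⟩
  · exact biSup_expect_le_of_forall_exists_eqMod ⟨E, hE⟩ (hdist x) (hdist y)
      (fun μ hμ => (hmatch x y hxy).1 μ (subset_closure (subset_convexHull ℝ _ hμ))) hf
  · refine biSup_expect_le_of_forall_exists_eqMod ⟨E, hE⟩ (hdist y) (hdist x)
      (fun ν hν => ?_) hf
    obtain ⟨μ, hμ, hμν⟩ := (hmatch x y hxy).2 ν (subset_closure (subset_convexHull ℝ _ hν))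
    exact ⟨μ, hμ, hμν.symm⟩
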